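/- For every positive integer k with 2 ≤ k ≤ n − 2, the local energy of the complete graph K_n equals the local energy of the disjoint union K_{n−k} ∪ K_k: e(K_n) = e(K_{n−k} ∪ K_k). -/

import Mathlib

open SimpleGraph Matrix Finset

noncomputable section

/-- The adjacency matrix of a simple graph over `ℝ` is Hermitian. -/
lemma adjMatrix_isHermitian {V : Type*} [Fintype V] (G : SimpleGraph V)
    [DecidableRel G.Adj] : (G.adjMatrix ℝ).IsHermitian := by
  rw [Matrix.IsHermitian, Matrix.conjTranspose_eq_transpose_of_trivial]
  exact G.isSymm_adjMatrix

/-- The energy of a finite simple graph: the sum of the absolute values of the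
eigenvalues of its adjacency matrix. -/
def graphEnergy {V : Type*} [Fintype V] [DecidableEq V] (G : SimpleGraph V) : ℝ :=
  letI := Classical.decRel G.Adj
  ∑ i, |(adjMatrix_isHermitian G).eigenvalues i|

/-- The local energy of `G` at a vertex `v`: the energy of `G` minus the energy of the
induced subgraph obtained by deleting `v`. -/
def localEnergyAt {V : Type*} [Fintype V] [DecidableEq V] (G : SimpleGraph V) (v : V) : ℝ :=
  graphEnergy G - graphEnergy (G.induce {u | u ≠ v})

/-- The local energy of `G`: the sum of the local energies at all vertices. -/
def localEnergy {V : Type*} [Fintype V] [DecidableEq V] (G : SimpleGraph V) : ℝ :=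
  ∑ v, localEnergyAt G v

/-!
Both sides equal `2n`. The adjacency matrix of `K_m` is `J - 1` with `J² = m J`, so its spectrum
is `{m - 1, -1}`; since the eigenvalues sum to the trace `0`, `E(K_m) = 2(m - 1)` for `m ≥ 1`, and
every vertex of `K_m` has local energy `E(K_m) - E(K_{m-1}) = 2` once `m ≥ 2`. Energy is additive
over disjoint unions (the adjacency matrix is block diagonal), and deleting a vertex only changes
its own component, so local energy is additive too: `e(K_{n-k} ∪ K_k) = 2(n - k) + 2k`.
-/

open Polynomial

theorem Matrix.IsHermitian.isRoot_eigenvalues_of_aeval_eq_zero {𝕜 n : Type*} [RCLike 𝕜]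
    [Fintype n] [DecidableEq n] {A : Matrix n n 𝕜} (hA : A.IsHermitian) {p : ℝ[X]}
    (hp : aeval A p = 0) (i : n) : p.IsRoot (hA.eigenvalues i) := by
  have : Nonempty n := ⟨i⟩
  have := spectrum.subset_polynomial_aeval A p ⟨_, hA.eigenvalues_mem_spectrum_real i, rfl⟩
  rwa [hp, spectrum.zero_eq, Set.mem_singleton_iff] at this

theorem SimpleGraph.adjMatrix_sum {V W α : Type*} [Zero α] [One α] (G : SimpleGraph V)
    (H : SimpleGraph W) [DecidableRel G.Adj] [DecidableRel H.Adj] [DecidableRel (G ⊕g H).Adj] :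
    (G ⊕g H).adjMatrix α = fromBlocks (G.adjMatrix α) 0 0 (H.adjMatrix α) := by
  ext (i | i) (j | j) <;> simp [adjMatrix_apply]

section Sum

variable {V W : Type*} [Fintype V] [DecidableEq V] [Fintype W] [DecidableEq W]

theorem graphEnergy_eq_sum_abs_eigenvalues (G : SimpleGraph V) [DecidableRel G.Adj] :
    graphEnergy G = ∑ i, |(adjMatrix_isHermitian G).eigenvalues i| := by
  obtain rfl : ‹DecidableRel G.Adj› = Classical.decRel G.Adj := Subsingleton.elim _ _
  rfl

theorem graphEnergy_eq_sum_abs_roots (G : SimpleGraph V) [DecidableRel G.Adj] :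
    graphEnergy G = ((G.adjMatrix ℝ).charpoly.roots.map (|·|)).sum := by
  rw [graphEnergy_eq_sum_abs_eigenvalues, (adjMatrix_isHermitian G).roots_charpoly_eq_eigenvalues,
    Multiset.map_map]
  rfl

theorem graphEnergy_congr {G : SimpleGraph V} {H : SimpleGraph W} (e : G ≃g H) :
    graphEnergy G = graphEnergy H := by
  classical
  rw [graphEnergy_eq_sum_abs_roots, graphEnergy_eq_sum_abs_roots,
    ← e.reindex_adjMatrix (α := ℝ), charpoly_reindex]

theorem graphEnergy_sum (G : SimpleGraph V) (H : SimpleGraph W) :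
    graphEnergy (G ⊕g H) = graphEnergy G + graphEnergy H := by
  classical
  rw [graphEnergy_eq_sum_abs_roots, graphEnergy_eq_sum_abs_roots, graphEnergy_eq_sum_abs_roots,
    adjMatrix_sum, charpoly_fromBlocks_zero₁₂,
    roots_mul ((charpoly_monic _).mul (charpoly_monic _)).ne_zero, Multiset.map_add,
    Multiset.sum_add]

def SimpleGraph.Iso.induceNe {G : SimpleGraph V} {H : SimpleGraph W} (e : G ≃g H) (v : V) :
    G.induce {u | u ≠ v} ≃g H.induce {u | u ≠ e v} where
  toEquiv := e.toEquiv.subtypeEquiv fun _ ↦ e.injective.ne_iff.symm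
  map_rel_iff' := e.map_adj_iff

theorem localEnergyAt_congr {G : SimpleGraph V} {H : SimpleGraph W} (e : G ≃g H) (v : V) :
    localEnergyAt G v = localEnergyAt H (e v) := by
  rw [localEnergyAt, localEnergyAt, graphEnergy_congr e, graphEnergy_congr (e.induceNe v)]

def SimpleGraph.Iso.sumInduceNeInl (G : SimpleGraph V) (H : SimpleGraph W) (v : V) :
    (G ⊕g H).induce {u | u ≠ .inl v} ≃g G.induce {a | a ≠ v} ⊕g H where
  toEquiv := Equiv.subtypeSum.trans <| .sumCongr
    (.subtypeEquivRight fun _ ↦ Sum.inl_injective.ne_iff) (.subtypeUnivEquiv fun _ ↦ by simp)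
  map_rel_iff' := by rintro ⟨a | b, _⟩ ⟨c | d, _⟩ <;> simp [Equiv.subtypeSum]

theorem localEnergyAt_sum_inl (G : SimpleGraph V) (H : SimpleGraph W) (v : V) :
    localEnergyAt (G ⊕g H) (.inl v) = localEnergyAt G v := by
  rw [localEnergyAt, localEnergyAt, graphEnergy_congr (Iso.sumInduceNeInl G H v), graphEnergy_sum,
    graphEnergy_sum, add_sub_add_right_eq_sub]

theorem localEnergyAt_sum_inr (G : SimpleGraph V) (H : SimpleGraph W) (w : W) :
    localEnergyAt (G ⊕g H) (.inr w) = localEnergyAt H w := by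
  rw [localEnergyAt_congr Iso.sumComm, ← localEnergyAt_sum_inl H G]
  rfl

theorem localEnergy_sum (G : SimpleGraph V) (H : SimpleGraph W) :
    localEnergy (G ⊕g H) = localEnergy G + localEnergy H := by
  simp only [localEnergy, Fintype.sum_sum_type, localEnergyAt_sum_inl, localEnergyAt_sum_inr]

end Sum

theorem Matrix.of_one_mul_of_one {V R : Type*} [Fintype V] [NonAssocSemiring R] :
    (of 1 : Matrix V V R) * of 1 = (Fintype.card V : R) • of 1 := by
  ext; simp [mul_apply]

section CompleteGraph

variable {V : Type*} [Fintype V] [DecidableEq V]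

-- `A + 1` is the all-ones matrix `J`, and `(J - |V|) * J = 0`.
theorem SimpleGraph.aeval_adjMatrix_top :
    aeval ((⊤ : SimpleGraph V).adjMatrix ℝ) ((X - C ((Fintype.card V : ℝ) - 1)) * (X + 1)) =
      0 := by
  simp only [map_mul, map_sub, map_add, aeval_X, aeval_C, map_one,
    adjMatrix_completeGraph_eq_of_one_sub_one, Algebra.algebraMap_eq_smul_one, sub_add_cancel,
    sub_mul, smul_mul_assoc, one_mul, of_one_mul_of_one, sub_self]

theorem SimpleGraph.eigenvalues_adjMatrix_top
    (hA : ((⊤ : SimpleGraph V).adjMatrix ℝ).IsHermitian) (i : V) :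
    hA.eigenvalues i = Fintype.card V - 1 ∨ hA.eigenvalues i = -1 := by
  simpa only [IsRoot, eval_mul, eval_sub, eval_add, eval_X, eval_C, eval_one, mul_eq_zero,
    sub_eq_zero, add_eq_zero_iff_eq_neg] using
    hA.isRoot_eigenvalues_of_aeval_eq_zero aeval_adjMatrix_top i

theorem graphEnergy_top [Nonempty V] :
    graphEnergy (⊤ : SimpleGraph V) = 2 * ((Fintype.card V : ℝ) - 1) := by
  set c : ℝ := (Fintype.card V : ℝ)
  have hc : c ≠ 0 := by positivity
  set hA := adjMatrix_isHermitian (⊤ : SimpleGraph V)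
  have hsum : ∑ i, hA.eigenvalues i = 0 := by
    simpa only [trace_adjMatrix, RCLike.ofReal_real_eq_id, id] using
      hA.trace_eq_sum_eigenvalues.symm
  -- `|λ|` agrees on the spectrum `{c - 1, -1}` with an affine function of `λ`.
  have habs (i : V) : |hA.eigenvalues i| = ((c - 2) * hA.eigenvalues i + 2 * (c - 1)) / c := by
    rcases eigenvalues_adjMatrix_top hA i with hi | hi <;> rw [hi] <;> field_simp
    · rw [abs_of_nonneg (sub_nonneg.mpr (Nat.one_le_cast.mpr Fintype.card_pos))]; ring
    · ring
  rw [graphEnergy_eq_sum_abs_eigenvalues, Finset.sum_congr rfl fun i _ ↦ habs i,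
    ← Finset.sum_div, Finset.sum_add_distrib, ← Finset.mul_sum, hsum]
  simp [c]

theorem localEnergyAt_top [Nontrivial V] (v : V) : localEnergyAt (⊤ : SimpleGraph V) v = 2 := by
  obtain ⟨w, hw⟩ := exists_ne v
  have : Nonempty {u | u ≠ v} := ⟨⟨w, hw⟩⟩
  have hcard : 1 ≤ Fintype.card V := Fintype.card_pos
  rw [localEnergyAt, induce_top, graphEnergy_top, graphEnergy_top, Set.card_ne_eq,
    Nat.cast_sub hcard]
  ring

theorem localEnergy_top [Nontrivial V] :
    localEnergy (⊤ : SimpleGraph V) = 2 * Fintype.card V := by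
  simp [localEnergy, localEnergyAt_top, mul_comm]

end CompleteGraph

theorem localEnergy_completeGraph_split (n k : ℕ) (hk : 2 ≤ k) (hkn : k ≤ n - 2) :
    localEnergy (⊤ : SimpleGraph (Fin n)) =
      localEnergy ((⊤ : SimpleGraph (Fin (n - k))) ⊕g (⊤ : SimpleGraph (Fin k))) := by
  have : Nontrivial (Fin n) := Fin.nontrivial_iff_two_le.mpr (by omega)
  have : Nontrivial (Fin (n - k)) := Fin.nontrivial_iff_two_le.mpr (by omega)
  have : Nontrivial (Fin k) := Fin.nontrivial_iff_two_le.mpr hk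
  rw [localEnergy_sum, localEnergy_top, localEnergy_top, localEnergy_top]
  simp only [Fintype.card_fin]
  rw [Nat.cast_sub (by omega)]
  ring
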